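/- Let γ ∈ M_n(ℕ), 1 ≤ i ≤ j ≤ n, and I = (i_1,…,i_s) ∈ 𝓘_{ij}(s). Then the following identity holds in U: E^γ E^{e_I} = Σ_{v_2=i_2}^{n} Σ_{v_3=i_3}^{n} ⋯ Σ_{v_s=i_s}^{n} (∏_{u=2}^{s} c_u) · E^{γ + Σ_{u=2}^{s}(e_{v_u i_{u−1}} − e_{v_u i_u})}, where c_u := γ_{v_u i_u} if v_u ≠ i_u and c_u := 1 if v_u = i_u, and any term whose exponent matrix has a negative strictly-lower-triangular entry is interpreted as zero. -/

import Mathlib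

open scoped BigOperators

noncomputable section

namespace OspBasis

/-- Commutator. -/
def br {U : Type*} [Ring U] (x y : U) : U := x * y - y * x

/-- Anticommutator. -/
def abr {U : Type*} [Ring U] (x y : U) : U := x * y + y * x

/-- The sign of a generator label: `true` = `+` ↦ 1, `false` = `−` ↦ −1. -/
def sg : Bool → ℂ := fun b => if b then 1 else -1

/-- Generators `B_j^±` of (the universal enveloping algebra of) `osp(1|2n)` together with
the Ganchev–Palev relations. -/
structure OspData (n : ℕ) (U : Type*) [Ring U] [Algebra ℂ U] where
  B : Bool → Fin n → U
  rel : ∀ (i j l : Fin n) (ξ η ε : Bool),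
    br (abr (B ξ i) (B η j)) (B ε l) =
      (sg ε - sg η) • (if j = l then B ξ i else 0) +
      (sg ε - sg ξ) • (if i = l then B η j else 0)

variable {n : ℕ} {U : Type*} [Ring U] [Algebra ℂ U]

/-- `E_{ij} := (1/2){B_i^+, B_j^-}`. -/
def Eop (d : OspData n U) (i j : Fin n) : U :=
  (2 : ℂ)⁻¹ • abr (d.B true i) (d.B false j)

/-- `h_i := E_{ii} − i + 1` (in 1-indexed notation); with 0-indexing, `h_i = E_{ii} − i`. -/
def hOp (d : OspData n U) (i : Fin n) : U :=
  Eop d i i - (((i : ℕ) : ℂ)) • (1 : U)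

/- ### Combinatorics of partitions and tableaux -/

/-- The number of columns of (the Young diagram of) `lam`. -/
def width (lam : Fin n → ℕ) : ℕ := Finset.univ.sup lam

/-- The length of the `l`-th column (0-indexed) of the diagram of `lam`. -/
def colLen (lam : Fin n → ℕ) (l : ℕ) : ℕ :=
  (Finset.univ.filter (fun k : Fin n => l < lam k)).card

/-- `ℓ(λ)`, the number of nonzero parts. -/
def plen (lam : Fin n → ℕ) : ℕ :=
  (Finset.univ.filter (fun k : Fin n => 0 < lam k)).card

/-- A filling `A : ℕ → ℕ → Fin n` (row, column) is semistandard for the shape `lam`: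
rows weakly increase, columns strictly increase (only cells of the diagram matter). -/
def IsSSYT (lam : Fin n → ℕ) (A : ℕ → ℕ → Fin n) : Prop :=
  (∀ (k : Fin n) (l1 l2 : ℕ), l1 ≤ l2 → l2 < lam k → A (k : ℕ) l1 ≤ A (k : ℕ) l2) ∧
  (∀ (k1 k2 : Fin n) (l : ℕ), k1 < k2 → l < lam k2 → A (k1 : ℕ) l < A (k2 : ℕ) l)

/-- A filling is normalized if it takes the default value `0` outside the diagram of `lam`;
this makes the representation of a tableau by a total function unique. -/
def IsNormalized (hn : 0 < n) (lam : Fin n → ℕ) (A : ℕ → ℕ → Fin n) : Prop :=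
  ∀ k l : ℕ, (∀ hk : k < n, lam ⟨k, hk⟩ ≤ l) → A k l = ⟨0, hn⟩

/-- The exponent matrix `γ_A`: `(γ_A)_{ij}` = number of entries equal to `i` in row `j`. -/
def expMat (lam : Fin n → ℕ) (A : ℕ → ℕ → Fin n) : Matrix (Fin n) (Fin n) ℕ :=
  Matrix.of fun i j => ((Finset.range (lam j)).filter (fun l => A (j : ℕ) l = i)).card

/-- The `j`-th row of `D(γ)` as a list: `γ_{ij}` copies of `i`, in increasing order of `i`. -/
def rowList (γ : Matrix (Fin n) (Fin n) ℕ) (j : Fin n) : List (Fin n) :=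
  (List.finRange n).flatMap (fun i => List.replicate (γ i j) i)

/-- The row-weakly-increasing filling `D(γ)` having `γ_{ij}` entries equal to `i` in row `j`. -/
def Dfill (hn : 0 < n) (γ : Matrix (Fin n) (Fin n) ℕ) : ℕ → ℕ → Fin n :=
  fun k l => if hk : k < n then (rowList γ ⟨k, hk⟩).getD l ⟨0, hn⟩ else ⟨0, hn⟩

/-- The Young subgroup `S_{λ'}` acting on columns. -/
abbrev ColPerm (lam : Fin n → ℕ) :=
  ∀ l : Fin (width lam), Equiv.Perm (Fin (colLen lam (l : ℕ)))

/-- The Young subgroup `S_λ` acting on rows. -/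
abbrev RowPerm (lam : Fin n → ℕ) :=
  ∀ k : Fin n, Equiv.Perm (Fin (lam k))

/-- The column-permuted filling `A_σ(k,l) = A(σ_l(k), l)`. -/
def colPermute (lam : Fin n → ℕ) (A : ℕ → ℕ → Fin n) (σ : ColPerm lam) : ℕ → ℕ → Fin n :=
  fun k l =>
    if hl : l < width lam then
      if hk : k < colLen lam l then A ((σ ⟨l, hl⟩) ⟨k, hk⟩ : ℕ) l else A k l
    else A k l

/-- The row-permuted filling `A^τ(k,l) = A(k, τ_k(l))`. -/
def rowPermute (lam : Fin n → ℕ) (A : ℕ → ℕ → Fin n) (τ : RowPerm lam) : ℕ → ℕ → Fin n :=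
  fun k l =>
    if hk : k < n then
      if hl : l < lam ⟨k, hk⟩ then A k ((τ ⟨k, hk⟩) ⟨l, hl⟩ : ℕ) else A k l
    else A k l

/-- `sgn(σ) = sgn(σ_1)⋯sgn(σ_{ℓ(λ')})`. -/
def sgnC (lam : Fin n → ℕ) (σ : ColPerm lam) : ℂ :=
  ∏ l : Fin (width lam), ((Equiv.Perm.sign (σ l) : ℤ) : ℂ)

/-- `B_A^+`, the column-by-column (left to right), top-to-bottom ordered product of the
creation operators prescribed by the filling `A`. -/
def BAop (d : OspData n U) (lam : Fin n → ℕ) (A : ℕ → ℕ → Fin n) : U :=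
  ((List.range (width lam)).map (fun l =>
    ((List.range (colLen lam l)).map (fun k => d.B true (A k l))).prod)).prod

/-- The monomial `E^γ = ∏→_{k=2..n} (E_{k1}^{γ_{k1}} ⋯ E_{k,k−1}^{γ_{k,k−1}})`. -/
def Epow (d : OspData n U) (γ : Matrix (Fin n) (Fin n) ℕ) : U :=
  ((List.finRange n).map (fun (k : Fin n) =>
    ((List.finRange n).map (fun (j : Fin n) =>
      if (j : ℕ) < (k : ℕ) then (Eop d k j) ^ (γ k j) else 1)).prod)).prod

variable {M : Type*} [AddCommGroup M] [Module ℂ M] [Module U M]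

/-- `ω_A := Σ_{σ ∈ S_{λ'}} sgn(σ) B^+_{A_σ} v₀`. -/
def omegaA (d : OspData n U) (lam : Fin n → ℕ) (v0 : M) (A : ℕ → ℕ → Fin n) : M :=
  ∑ σ : ColPerm lam, sgnC lam σ • ((BAop d lam (colPermute lam A σ)) • v0)

/-- `Ω_A := Σ_{τ ∈ S_λ} ω_{A^τ}`. -/
def OmegaA (d : OspData n U) (lam : Fin n → ℕ) (v0 : M) (A : ℕ → ℕ → Fin n) : M :=
  ∑ τ : RowPerm lam, omegaA d lam v0 (rowPermute lam A τ)

/-- `Ω_λ := Ω_{D(γ_λ)}` where `γ_λ = diag(λ_1,…,λ_n)`. -/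
def OmegaLam (d : OspData n U) (hn : 0 < n) (lam : Fin n → ℕ) (v0 : M) : M :=
  OmegaA d lam v0 (Dfill hn (Matrix.diagonal lam))

/- ### Mickelsson–Zhelobenko raising and lowering operators -/

/-- Ordered product over a finite set of (pairwise commuting) algebra elements. -/
def oprod (S : Finset (Fin n)) (f : Fin n → U) : U :=
  ((S.sort (· ≤ ·)).map f).prod

/-- `E^{e_I} = E_{i_2 i_1} E_{i_3 i_2} ⋯ E_{i_s i_{s−1}}` for `I = (i_1, …, i_s)`. -/
def chainE (d : OspData n U) : List (Fin n) → U
  | a :: b :: rest => Eop d b a * chainE d (b :: rest)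
  | _ => 1

/-- `∏_{u} γ_{i_{u+1} i_u}` over consecutive pairs of a list. -/
def chainProd (γ : Matrix (Fin n) (Fin n) ℕ) : List (Fin n) → ℕ
  | a :: b :: rest => γ b a * chainProd γ (b :: rest)
  | _ => 1

/-- `e_I = Σ_u e_{i_{u+1} i_u}` over consecutive pairs of a list. -/
def eJmat : List (Fin n) → Matrix (Fin n) (Fin n) ℕ
  | a :: b :: rest => Matrix.single b a 1 + eJmat (b :: rest)
  | _ => 0

/-- The increasing sequence `I ∈ 𝓘_{ij}(s)` determined by its set `{i} ∪ {j} ∪ T` of members. -/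
def sortIns (i j : Fin n) (T : Finset (Fin n)) : List (Fin n) :=
  Finset.sort (insert i (insert j T)) (· ≤ ·)

/-- The normalized raising operator `z_j^+`. -/
def zplus (d : OspData n U) (j : Fin n) : U :=
  ∑ i ∈ Finset.Iic j, ∑ T ∈ (Finset.Ioo i j).powerset,
    ((-1 : ℂ) ^ (T.card + (if i = j then 0 else 1))) •
      (chainE d (sortIns i j T) * d.B true i *
        oprod ((Finset.Ioo i j) \ T) (fun l => hOp d l - hOp d j - 1) *
        oprod (Finset.Iio i) (fun l => hOp d l - hOp d j))

/-- The normalized lowering operator `z_j^-`. -/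
def zminus (d : OspData n U) (j : Fin n) : U :=
  ∑ i ∈ Finset.Ici j, ∑ T ∈ (Finset.Ioo j i).powerset,
    chainE d (sortIns j i T) * d.B false i *
      oprod ((Finset.Ioi j) \ (insert i T)) (fun l => hOp d j - hOp d l)

/-- The `gl`-lowering operator `y_{mj}` (for `j < m`). -/
def yop (d : OspData n U) (m j : Fin n) : U :=
  Eop d m j * oprod (Finset.Ioo j m) (fun l => hOp d j - hOp d l)
  + ∑ i ∈ Finset.Ioo j m, ∑ T ∈ (Finset.Ioo j i).powerset,
      chainE d (sortIns j i T) * Eop d m i *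
        oprod ((Finset.Ioo j m) \ (insert j (insert i T))) (fun l => hOp d j - hOp d l)

/-- `∏→_{k=2..n} (y_{k1}^{γ_{k1}} ⋯ y_{k,k−1}^{γ_{k,k−1}})`. -/
def Ypow (d : OspData n U) (γ : Matrix (Fin n) (Fin n) ℕ) : U :=
  ((List.finRange n).map (fun (k : Fin n) =>
    ((List.finRange n).map (fun (j : Fin n) =>
      if (j : ℕ) < (k : ℕ) then (yop d k j) ^ (γ k j) else 1)).prod)).prod

/-- `(z_n^+)^{λ_n} ⋯ (z_1^+)^{λ_1}`. -/
def Zword (d : OspData n U) (lam : Fin n → ℕ) : U :=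
  ((List.finRange n).reverse.map (fun j => (zplus d j) ^ (lam j))).prod

/- ### The coefficients `d_i^±(λ)` -/

/-- Extension of `λ` by zero; `lamext lam a = λ_{a+1}` in 1-indexed notation, `λ_{n+1} = 0`. -/
def lamext (lam : Fin n → ℕ) (a : ℕ) : ℕ := if h : a < n then lam ⟨a, h⟩ else 0

/-- `[m]_2`: 0 if `m` is even, 1 if `m` is odd. -/
def parZ (m : ℤ) : ℕ := m.natAbs % 2

/-- The coefficient `d_i^+(λ)`. -/
def dplus (lam : Fin n → ℕ) (i : Fin n) : ℂ :=
  ((-1 : ℂ)) ^ (∑ a ∈ Finset.Ico (i : ℕ) n,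
      (a + 2) * ((lamext lam a - lamext lam (a + 1)) + (if a = (i : ℕ) then 1 else 0)))
    / (((lam i : ℂ) + 1) * (((i : ℕ) : ℂ) + 1))
    * ∏ l ∈ Finset.Iio i,
        (((lam i : ℂ) - (lam l : ℂ) - ((i : ℕ) : ℂ) + ((l : ℕ) : ℂ) + 1) /
         ((lam i : ℂ) - (lam l : ℂ) - ((i : ℕ) : ℂ) + ((l : ℕ) : ℂ) +
           (parZ ((lam i : ℤ) - (lam l : ℤ)) : ℂ)))

/-- The coefficient `d_i^-(λ)`. -/
def dminus (p : ℕ) (lam : Fin n → ℕ) (i : Fin n) : ℂ :=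
  ((-1 : ℂ)) ^ (∑ a ∈ Finset.Ico (i : ℕ) n, (a + 2) * (lamext lam a - lamext lam (a + 1)))
    * ((lam i : ℂ) + 1) * (((i : ℕ) : ℂ) + 1)
    * ((lam i : ℂ) + (n : ℂ) - (((i : ℕ) : ℂ) + 1) + (parZ (lam i : ℤ) : ℂ) * ((p : ℂ) - (n : ℂ)))
    * ∏ l ∈ Finset.Ioi i,
        (((lam i : ℂ) - (lam l : ℂ) - ((i : ℕ) : ℂ) + ((l : ℕ) : ℂ) - 1) /
         ((lam i : ℂ) - (lam l : ℂ) - ((i : ℕ) : ℂ) + ((l : ℕ) : ℂ) -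
           (parZ ((lam i : ℤ) - (lam l : ℤ)) : ℂ)))

/-- The index set of semistandard Young tableaux with at most `p` rows (shape bundled),
in normalized total-function representation. -/
def SSYTp (hn : 0 < n) (p : ℕ) :=
  {x : (Fin n → ℕ) × (ℕ → ℕ → Fin n) //
    Antitone x.1 ∧ plen x.1 ≤ p ∧ IsSSYT x.1 x.2 ∧ IsNormalized hn x.1 x.2}

end OspBasis

open OspBasis

open Classical in
/-- `E^γ` for an integer exponent matrix: interpreted as `0` whenever a strictly
lower-triangular entry is negative. -/
def EpowZ {n : ℕ} {U : Type*} [Ring U] [Algebra ℂ U] (d : OspData n U)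
    (γ : Matrix (Fin n) (Fin n) ℤ) : U :=
  if ∀ a b : Fin n, (b : ℕ) < (a : ℕ) → 0 ≤ γ a b then
    Epow d (Matrix.of fun a b => (γ a b).toNat)
  else 0

/-!
Induction on `s`, splitting off the first factor `E_{i₂ i₁}` of `E^{e_I}`. The step is the
straightening rule: for `i < j`,
`E^γ E_{ji} = E^{γ + e_{ji}} + Σ_{v > j} γ_{vj} E^{γ + e_{vi} − e_{vj}}`.
To see it, move `E_{ji}` leftwards through the row factors
`E_{k1}^{γ_{k1}} ⋯ E_{k,k−1}^{γ_{k,k−1}}` of `E^γ` with `k > j`. The factors of one row commute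
with each other, and `E_{ji}` commutes with all of them except `E_{kj}^{γ_{kj}}`, where
`E_{kj}^m E_{ji} = E_{ji} E_{kj}^m + m E_{ki} E_{kj}^{m−1}`; the new `E_{ki}` commutes with row `k`
and is absorbed into it. Once `E_{ji}` reaches row `j` it is
absorbed there, so rows `k < j` are never crossed.

The induction runs over integer exponent matrices that are nonnegative below the diagonal: a shifted
exponent `γ + e_{vi} − e_{vj}` turns negative only when its coefficient `γ_{vj}` vanishes.
-/

theorem List.prod_map_update_eq_mul {ι M : Type*} [DecidableEq ι] [Monoid M] {L : List ι}
    (hL : L.Nodup) {l : ι} (hl : l ∈ L) (f : ι → M) {x : M} (hx : ∀ m ∈ L, Commute x (f m)) :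
    (L.map (Function.update f l (x * f l))).prod = x * (L.map f).prod := by
  induction L with
  | nil => cases hl
  | cons a L ih =>
    obtain ⟨haL, hL⟩ := List.nodup_cons.mp hL
    simp only [List.map_cons, List.prod_cons]
    by_cases hal : a = l
    · subst hal
      have htail : L.map (Function.update f a (x * f a)) = L.map f :=
        List.map_congr_left fun m hm => Function.update_of_ne (ne_of_mem_of_not_mem hm haL) _ _
      rw [htail, Function.update_self, mul_assoc]
    · have hlL : l ∈ L := (List.mem_cons.mp hl).resolve_left (Ne.symm hal)
      rw [Function.update_of_ne hal, ih hL hlL fun m hm => hx m (List.mem_cons_of_mem a hm),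
        ← mul_assoc, ← (hx a List.mem_cons_self).eq, mul_assoc]

theorem Fin.sum_piFinset_succ {α M : Type*} [DecidableEq α] [AddCommMonoid M] {s : ℕ}
    (S : Fin (s + 1) → Finset α) (F : (Fin (s + 1) → α) → M) :
    ∑ v ∈ Fintype.piFinset S, F v =
      ∑ a ∈ S 0, ∑ w ∈ Fintype.piFinset (fun u => S u.succ), F (Fin.cons a w) := by
  rw [← Finset.sum_product' (f := fun a w => F (Fin.cons a w))]
  have h := Finset.filter_piFinset_eq_map_consEquiv S (fun _ => True)
  rw [Finset.filter_true, Finset.filter_true] at h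
  rw [h, Finset.sum_map]
  rfl

namespace OspBasis

theorem br_abr {U : Type*} [Ring U] (x y z : U) :
    br x (abr y z) = abr (br x y) z + abr y (br x z) := by
  simp only [br, abr]
  noncomm_ring

variable {n : ℕ} {U : Type*} [Ring U] [Algebra ℂ U] (d : OspData n U)

theorem br_smul_left (c : ℂ) (x y : U) : br (c • x) y = c • br x y := by
  simp only [br, smul_mul_assoc, mul_smul_comm, smul_sub]

theorem br_smul_right (c : ℂ) (x y : U) : br x (c • y) = c • br x y := by
  simp only [br, smul_mul_assoc, mul_smul_comm, smul_sub]

theorem br_Eop_B_true (a b l : Fin n) :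
    br (Eop d a b) (d.B true l) = if b = l then d.B true a else 0 := by
  rw [Eop, br_smul_left, d.rel a b l true false true]
  simp only [sg, ↓reduceIte, Bool.false_eq_true, sub_neg_eq_add, smul_ite, smul_zero, sub_self,
    zero_smul, ite_self, add_zero, smul_smul]
  norm_num

theorem br_Eop_B_false (a b l : Fin n) :
    br (Eop d a b) (d.B false l) = -if a = l then d.B false b else 0 := by
  rw [Eop, br_smul_left, d.rel a b l true false false]
  simp only [sg, Bool.false_eq_true, ↓reduceIte, sub_self, smul_ite, zero_smul, smul_zero, ite_self,
    zero_add, smul_smul]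
  split_ifs <;> norm_num

theorem br_Eop_Eop (a b c e : Fin n) :
    br (Eop d a b) (Eop d c e) =
      (if b = c then Eop d a e else 0) - (if e = a then Eop d c b else 0) := by
  rw (occs := .pos [2]) [Eop]
  rw [br_smul_right, br_abr, br_Eop_B_true, br_Eop_B_false]
  rcases eq_or_ne b c with rfl | h1 <;> rcases eq_or_ne a e with rfl | h2 <;>
    simp [abr, Eop, *, Ne.symm, smul_add] <;> abel

theorem Eop_mul_Eop (a b c e : Fin n) :
    Eop d a b * Eop d c e = Eop d c e * Eop d a b
      + (if b = c then Eop d a e else 0) - (if e = a then Eop d c b else 0) := by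
  have h := br_Eop_Eop d a b c e
  rw [br] at h
  linear_combination (norm := noncomm_ring) h

theorem commute_Eop {a b c e : Fin n} (hbc : b ≠ c) (hea : e ≠ a) :
    Commute (Eop d a b) (Eop d c e) := by
  have h := Eop_mul_Eop d a b c e
  simp only [hbc, hea, if_false, add_zero, sub_zero] at h
  exact h

theorem Eop_pow_mul_Eop {i j k : Fin n} (hik : i ≠ k) (hjk : j ≠ k) (m : ℕ) :
    Eop d k j ^ m * Eop d j i =
      Eop d j i * Eop d k j ^ m + m • (Eop d k i * Eop d k j ^ (m - 1)) := by
  have hstep : Eop d k j * Eop d j i = Eop d j i * Eop d k j + Eop d k i := by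
    simpa [hik] using Eop_mul_Eop d k j j i
  have hcomm : Commute (Eop d k i) (Eop d k j) := commute_Eop d hik hjk
  induction m with
  | zero => simp
  | succ m ih =>
    rcases m with _ | m
    · simpa using hstep
    rw [pow_succ', mul_assoc, ih, mul_add, ← mul_assoc, hstep, mul_smul_comm, ← mul_assoc,
      ← hcomm.eq]
    simp only [add_mul, mul_assoc, ← pow_succ', add_smul, one_smul, Nat.add_sub_cancel]
    abel

def Erow (k : Fin n) (r : Fin n → ℕ) : U :=
  ((List.finRange n).map fun l : Fin n => if (l : ℕ) < (k : ℕ) then Eop d k l ^ r l else 1).prod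

theorem Erow_congr {k : Fin n} {r r' : Fin n → ℕ} (h : ∀ l, l < k → r l = r' l) :
    Erow d k r = Erow d k r' := by
  unfold Erow
  congr 1
  refine List.map_congr_left fun l _ => ?_
  split_ifs with hl
  · rw [h l hl]
  · rfl

theorem commute_Erow {x : U} {k : Fin n} {r : Fin n → ℕ}
    (h : ∀ l, l < k → r l ≠ 0 → Commute x (Eop d k l)) : Commute x (Erow d k r) := by
  refine Commute.list_prod_right _ _ fun y hy => ?_
  obtain ⟨l, -, rfl⟩ := List.mem_map.mp hy
  split_ifs with hl
  · by_cases hr : r l = 0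
    · simp [hr]
    · exact (h l hl hr).pow_right _
  · exact Commute.one_right x

theorem Erow_add_single {k l : Fin n} (hl : l < k) (r : Fin n → ℕ) (m : ℕ) :
    Erow d k (r + Pi.single l m) = Eop d k l ^ m * Erow d k r := by
  set f : Fin n → U := fun l' => if (l' : ℕ) < (k : ℕ) then Eop d k l' ^ r l' else 1
  have hfactor : (fun l' : Fin n => if (l' : ℕ) < (k : ℕ)
      then Eop d k l' ^ (r + Pi.single l m : Fin n → ℕ) l' else 1) =
      Function.update f l (Eop d k l ^ m * f l) := by
    funext l'
    rcases eq_or_ne l' l with rfl | hne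
    · simp [f, hl, pow_add, add_comm (r l')]
    · simp [f, hne]
  unfold Erow
  rw [hfactor]
  refine List.prod_map_update_eq_mul (List.nodup_finRange n) (List.mem_finRange l) f
    fun l' _ => ?_
  simp only [f]
  split_ifs with hl'
  · exact (commute_Eop d hl.ne (show l' < k from hl').ne).pow_pow _ _
  · exact Commute.one_right _

theorem Erow_mul_Eop {i j k : Fin n} (hij : i < j) (hjk : j < k) (r : Fin n → ℕ) :
    Erow d k r * Eop d j i =
      Eop d j i * Erow d k r + r j • Erow d k (r + Pi.single i 1 - Pi.single j 1) := by
  set r₀ := r - Pi.single j (r j)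
  have hr : r = r₀ + Pi.single j (r j) := by
    funext l; by_cases hl : l = j <;> simp [r₀, hl]
  have hshift : r + Pi.single i 1 - Pi.single j 1 = r₀ + Pi.single j (r j - 1) + Pi.single i 1 := by
    funext l; by_cases hl : l = j <;> by_cases hl' : l = i <;> simp [r₀, hl, hl', hij.ne]
  have hcomm : Commute (Eop d j i) (Erow d k r₀) := commute_Erow d fun l _ hl =>
    commute_Eop d (hij.trans hjk).ne fun hlj => hl (by simp [r₀, hlj])
  rw [hshift, Erow_add_single d (hij.trans hjk), Erow_add_single d hjk, hr,
    Erow_add_single d hjk, mul_assoc, ← hcomm.eq, ← mul_assoc,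
    Eop_pow_mul_Eop d (hij.trans hjk).ne hjk.ne, add_mul, mul_assoc, smul_mul_assoc, mul_assoc]
  simp [r₀]

theorem Erow_mul_Eop_self {i j : Fin n} (hij : i < j) (r : Fin n → ℕ) :
    Erow d j r * Eop d j i = Erow d j (r + Pi.single i 1 - Pi.single j 1) := by
  have hcomm : Commute (Eop d j i) (Erow d j r) :=
    commute_Erow d fun l hl _ => commute_Eop d hij.ne hl.ne
  rw [← hcomm.eq, ← pow_one (Eop d j i), ← Erow_add_single d hij]
  exact Erow_congr d fun l hl => by simp [hl.ne]

theorem row_add_single_sub_single_self (γ : Matrix (Fin n) (Fin n) ℕ) (v i j : Fin n) :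
    (γ + Matrix.single v i 1 - Matrix.single v j 1 : Matrix (Fin n) (Fin n) ℕ) v =
      γ v + Pi.single i 1 - Pi.single j 1 := by
  funext l
  simp [Matrix.single_apply, Pi.single_apply, eq_comm]

theorem row_add_single_sub_single_of_ne (γ : Matrix (Fin n) (Fin n) ℕ) {a v : Fin n}
    (h : a ≠ v) (i j : Fin n) :
    (γ + Matrix.single v i 1 - Matrix.single v j 1 : Matrix (Fin n) (Fin n) ℕ) a = γ a := by
  funext l
  simp [h.symm]

def Erows (γ : Matrix (Fin n) (Fin n) ℕ) (K : List (Fin n)) : U :=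
  (K.map fun k => Erow d k (γ k)).prod

theorem Erows_congr {γ γ' : Matrix (Fin n) (Fin n) ℕ} {K : List (Fin n)}
    (h : ∀ k ∈ K, γ k = γ' k) : Erows d γ K = Erows d γ' K := by
  unfold Erows
  rw [List.map_congr_left fun k hk => by rw [h k hk]]

theorem Erows_mul_Eop {i j : Fin n} (hij : i < j) (γ : Matrix (Fin n) (Fin n) ℕ)
    {K : List (Fin n)} (hK : K.Nodup) (hKj : ∀ k ∈ K, j < k) :
    Erows d γ K * Eop d j i = Eop d j i * Erows d γ K +
      (K.map fun v => γ v j • Erows d (γ + Matrix.single v i 1 - Matrix.single v j 1) K).sum := by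
  induction K with
  | nil => simp [Erows]
  | cons a K ih =>
    obtain ⟨haK, hK⟩ := List.nodup_cons.mp hK
    have hrest : Erows d (γ + Matrix.single a i 1 - Matrix.single a j 1) K = Erows d γ K :=
      Erows_congr d fun k hk => row_add_single_sub_single_of_ne γ (ne_of_mem_of_not_mem hk haK) i j
    have hhead : ∀ v ∈ K, Erow d a ((γ + Matrix.single v i 1 - Matrix.single v j 1 :
        Matrix (Fin n) (Fin n) ℕ) a) = Erow d a (γ a) := fun v hv => by
      rw [row_add_single_sub_single_of_ne γ (ne_of_mem_of_not_mem hv haK).symm]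
    simp only [Erows, List.map_cons, List.prod_cons, List.sum_cons] at ih hrest ⊢
    rw [mul_assoc, ih hK fun k hk => hKj k (List.mem_cons_of_mem a hk), mul_add, ← mul_assoc,
      Erow_mul_Eop d hij (hKj a List.mem_cons_self), add_mul, smul_mul_assoc, mul_assoc,
      row_add_single_sub_single_self, hrest, add_assoc, ← List.sum_map_mul_left]
    congr 3
    refine List.map_congr_left fun v hv => ?_
    rw [mul_smul_comm, hhead v hv]

theorem exists_finRange_eq_append_cons (j : Fin n) :
    ∃ K₁ K₂ : List (Fin n), List.finRange n = K₁ ++ j :: K₂ ∧ (∀ k ∈ K₁, k < j) ∧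
      K₂.Nodup ∧ K₂.toFinset = Finset.Ioi j := by
  obtain ⟨K₁, K₂, hsplit⟩ := List.append_of_mem (List.mem_finRange j)
  have hsorted := List.pairwise_lt_finRange n
  rw [hsplit, List.pairwise_append, List.pairwise_cons] at hsorted
  obtain ⟨-, ⟨hjK₂, hK₂⟩, hK₁⟩ := hsorted
  refine ⟨K₁, K₂, hsplit, fun k hk => hK₁ k hk j List.mem_cons_self, hK₂.nodup, ?_⟩
  ext v
  simp only [List.mem_toFinset, Finset.mem_Ioi]
  refine ⟨hjK₂ v, fun hv => ?_⟩
  have hmem := List.mem_finRange v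
  rw [hsplit, List.mem_append, List.mem_cons] at hmem
  rcases hmem with h | rfl | h
  · exact absurd (hK₁ v h j List.mem_cons_self) hv.asymm
  · exact absurd hv (lt_irrefl v)
  · exact h

theorem Epow_mul_Eop {i j : Fin n} (hij : i < j) (γ : Matrix (Fin n) (Fin n) ℕ) :
    Epow d γ * Eop d j i = ∑ v ∈ Finset.Ici j,
      (if v = j then 1 else γ v j) • Epow d (γ + Matrix.single v i 1 - Matrix.single v j 1) := by
  obtain ⟨K₁, K₂, hsplit, hK₁, hK₂, hK₂j⟩ := exists_finRange_eq_append_cons j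
  have hK₂gt : ∀ k ∈ K₂, j < k := fun k hk =>
    Finset.mem_Ioi.mp (hK₂j ▸ List.mem_toFinset.mpr hk)
  have hEpow : ∀ δ, Epow d δ = Erows d δ K₁ * (Erow d j (δ j) * Erows d δ K₂) := fun δ => by
    change Erows d δ (List.finRange n) = _
    rw [hsplit]
    simp [Erows]
  have hK₁v : ∀ v, j ≤ v → Erows d (γ + Matrix.single v i 1 - Matrix.single v j 1) K₁ =
      Erows d γ K₁ := fun v hv => Erows_congr d fun k hk =>
    row_add_single_sub_single_of_ne γ ((hK₁ k hk).trans_le hv).ne i j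
  have hself : Erows d γ K₁ * (Erow d j (γ j) * (Eop d j i * Erows d γ K₂)) =
      Epow d (γ + Matrix.single j i 1 - Matrix.single j j 1) := by
    rw [hEpow, hK₁v j le_rfl, ← mul_assoc (Erow d j _), Erow_mul_Eop_self d hij,
      row_add_single_sub_single_self, Erows_congr d fun k hk =>
        row_add_single_sub_single_of_ne γ (hK₂gt k hk).ne' i j]
  have hother : ∀ v ∈ K₂, Erows d γ K₁ * (Erow d j (γ j) *
      Erows d (γ + Matrix.single v i 1 - Matrix.single v j 1) K₂) =
      Epow d (γ + Matrix.single v i 1 - Matrix.single v j 1) := fun v hv => by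
    rw [hEpow, hK₁v v (hK₂gt v hv).le,
      row_add_single_sub_single_of_ne γ (hK₂gt v hv).ne]
  rw [← Finset.Ioi_insert, Finset.sum_insert Finset.notMem_Ioi_self, if_pos rfl, one_smul,
    ← hK₂j, List.sum_toFinset _ hK₂, hEpow γ, mul_assoc, mul_assoc, Erows_mul_Eop d hij γ hK₂ hK₂gt,
    mul_add, mul_add, hself, ← List.sum_map_mul_left, ← List.sum_map_mul_left]
  congr 2
  refine List.map_congr_left fun v hv => ?_
  rw [if_neg (hK₂gt v hv).ne', mul_smul_comm, mul_smul_comm, hother v hv]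

theorem Epow_congr {γ γ' : Matrix (Fin n) (Fin n) ℕ} (h : ∀ a b, b < a → γ a b = γ' a b) :
    Epow d γ = Epow d γ' :=
  congrArg List.prod (List.map_congr_left fun k _ => Erow_congr d fun l hl => h k l hl)

end OspBasis

section IntegerExponents

variable {n : ℕ} {U : Type*} [Ring U] [Algebra ℂ U] (d : OspData n U)

theorem EpowZ_eq_Epow {δ : Matrix (Fin n) (Fin n) ℤ} {γ : Matrix (Fin n) (Fin n) ℕ}
    (h : ∀ a b, b < a → δ a b = γ a b) : EpowZ d δ = Epow d γ := by
  rw [EpowZ, if_pos fun a b hab => (h a b hab).symm ▸ Int.natCast_nonneg _]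
  exact Epow_congr d fun a b hab => by simp [h a b hab]

theorem EpowZ_mul_Eop {δ : Matrix (Fin n) (Fin n) ℤ} (hδ : ∀ a b, b < a → 0 ≤ δ a b)
    {i j : Fin n} (hij : i < j) :
    EpowZ d δ * Eop d j i = ∑ v ∈ Finset.Ici j, ((if v = j then 1 else δ v j : ℤ) : ℂ) •
      EpowZ d (δ + Matrix.single v i 1 - Matrix.single v j 1) := by
  set γ : Matrix (Fin n) (Fin n) ℕ := Matrix.of fun a b => (δ a b).toNat
  have hγ : ∀ a b, b < a → δ a b = γ a b := fun a b hab => by simp [γ, hδ a b hab]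
  rw [EpowZ_eq_Epow d hγ, Epow_mul_Eop d hij γ]
  refine Finset.sum_congr rfl fun v hv => ?_
  have hjv : j ≤ v := Finset.mem_Ici.mp hv
  have hcoef : ((if v = j then 1 else δ v j : ℤ) : ℂ) = ((if v = j then 1 else γ v j : ℕ) : ℂ) := by
    split_ifs with hvj
    · simp
    · rw [hγ v j (lt_of_le_of_ne hjv (Ne.symm hvj)), Int.cast_natCast]
  rw [hcoef, Nat.cast_smul_eq_nsmul]
  by_cases hc : (if v = j then 1 else γ v j) = 0
  · simp [hc]
  refine (congrArg _ (EpowZ_eq_Epow d fun a b hab => ?_)).symm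
  have hab' := hδ a b hab
  rcases eq_or_ne a v with rfl | hav
  · simp only [Matrix.sub_apply, Matrix.add_apply, Matrix.single_apply, γ, Matrix.of_apply,
      true_and] at hc ⊢
    split_ifs at hc ⊢ <;> subst_vars <;> omega
  · simp [hav.symm, γ, hab']

theorem EpowZ_mul_prod_Eop {δ : Matrix (Fin n) (Fin n) ℤ} (hδ : ∀ a b, b < a → 0 ≤ δ a b)
    (s : ℕ) (I : Fin (s + 1) → Fin n) (hI : StrictMono I) :
    EpowZ d δ * ((List.finRange s).map fun u : Fin s => Eop d (I u.succ) (I u.castSucc)).prod =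
      ∑ v ∈ Fintype.piFinset fun u : Fin s => Finset.Ici (I u.succ),
        (∏ u : Fin s, ((if v u = I u.succ then 1 else δ (v u) (I u.succ) : ℤ) : ℂ)) •
          EpowZ d (δ + ∑ u : Fin s, (Matrix.single (v u) (I u.castSucc) 1 -
            Matrix.single (v u) (I u.succ) 1)) := by
  induction s generalizing δ with
  | zero => simp
  | succ s ih =>
    have hcol : ∀ u : Fin s, I u.succ.succ ≠ I 0 ∧ I u.succ.succ ≠ I 1 := fun u =>
      ⟨(hI (Fin.succ_pos _)).ne', (hI (Fin.succ_lt_succ_iff.mpr (Fin.succ_pos u))).ne'⟩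
    rw [List.finRange_succ, List.map_cons, List.prod_cons, List.map_map, ← mul_assoc,
      Fin.sum_piFinset_succ]
    simp only [Fin.succ_zero_eq_one, Fin.castSucc_zero, Fin.cons_zero, Fin.cons_succ,
      Fin.prod_univ_succ, Fin.sum_univ_succ, Function.comp_def]
    rw [EpowZ_mul_Eop d hδ (hI Fin.zero_lt_one), Finset.sum_mul]
    refine Finset.sum_congr rfl fun a ha => ?_
    by_cases hc : (if a = I 1 then 1 else δ a (I 1)) = 0
    · simp [hc]
    have hδ' : ∀ x y, y < x →
        0 ≤ (δ + Matrix.single a (I 0) 1 - Matrix.single a (I 1) 1 :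
          Matrix (Fin n) (Fin n) ℤ) x y := by
      intro x y hxy
      have := hδ x y hxy
      rcases eq_or_ne x a with rfl | hxa
      · simp only [Matrix.sub_apply, Matrix.add_apply, Matrix.single_apply, true_and]
        split_ifs at hc ⊢ <;> subst_vars <;> omega
      · simp [hxa.symm, this]
    have hchain := ih hδ' (fun u => I u.succ) (hI.comp Fin.strictMono_succ)
    simp only [Fin.succ_castSucc] at hchain
    rw [smul_mul_assoc, hchain, Finset.smul_sum]
    refine Finset.sum_congr rfl fun w _ => ?_
    rw [smul_smul]
    congr 1
    · refine congrArg _ (Finset.prod_congr rfl fun u _ => ?_)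
      simp [(hcol u).1.symm, (hcol u).2.symm]
    · rw [add_sub_assoc, add_assoc]

end IntegerExponents

theorem stmt16_general {n : ℕ} {U : Type*} [Ring U] [Algebra ℂ U] (d : OspData n U)
    (γ : Matrix (Fin n) (Fin n) ℕ)
    (s : ℕ) (I : Fin (s + 1) → Fin n) (hI : StrictMono I) :
    Epow d γ * ((List.finRange s).map (fun u => Eop d (I u.succ) (I u.castSucc))).prod =
      ∑ v ∈ Finset.univ.filter (fun v : Fin s → Fin n => ∀ u, I u.succ ≤ v u),
        ((∏ u : Fin s, (if v u = I u.succ then 1 else γ (v u) (I u.succ)) : ℕ) : ℂ) •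
          EpowZ d ((Matrix.of fun a b => ((γ a b : ℤ))) +
            ∑ u : Fin s,
              (Matrix.single (v u) (I u.castSucc) (1 : ℤ) -
               Matrix.single (v u) (I u.succ) (1 : ℤ))) := by
  have hrange : Finset.univ.filter (fun v : Fin s → Fin n => ∀ u, I u.succ ≤ v u) =
      Fintype.piFinset fun u => Finset.Ici (I u.succ) := by
    ext v
    simp [Fintype.mem_piFinset]
  rw [← EpowZ_eq_Epow d (δ := Matrix.of fun a b => (γ a b : ℤ)) fun _ _ _ => rfl,
    EpowZ_mul_prod_Eop d (fun _ _ _ => by simp) s I hI, hrange]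
  push_cast
  rfl

theorem stmt16 {n : ℕ} (hn : 0 < n) {U : Type*} [Ring U] [Algebra ℂ U] (d : OspData n U)
    (γ : Matrix (Fin n) (Fin n) ℕ)
    (s : ℕ) (I : Fin (s + 1) → Fin n) (hI : StrictMono I) :
    Epow d γ * ((List.finRange s).map (fun u => Eop d (I u.succ) (I u.castSucc))).prod =
      ∑ v ∈ Finset.univ.filter (fun v : Fin s → Fin n => ∀ u, I u.succ ≤ v u),
        ((∏ u : Fin s, (if v u = I u.succ then 1 else γ (v u) (I u.succ)) : ℕ) : ℂ) •
          EpowZ d ((Matrix.of fun a b => ((γ a b : ℤ))) +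
            ∑ u : Fin s,
              (Matrix.single (v u) (I u.castSucc) (1 : ℤ) -
               Matrix.single (v u) (I u.succ) (1 : ℤ))) :=
  stmt16_general d γ s I hI
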